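/- arXiv:1011.3997 — 2 statements merged into one kernel-verified Lean document; each statement's English description precedes it below -/
import Mathlib

section
/- With the notation above, let N, M be positive integers and for integers a < b let e(a,b) be the number of n with N < n ≤ N+M and a < Δ_n ≤ b, and f(a,b) the number of n with N < n ≤ N+M and a < Δ(n) ≤ b. Then |e(a,b) − f(−(b+1), −(a+1))| ≤ |a| + |b| + 2. -/
open Finset

/-! The two displacements are dual: `Δ n ≤ c ↔ γ n ≤ t (n + c) ↔ -(c + 1) < Δ' (n + c)`.
Hence both `e(a, b)` and `f(-(b + 1), -(a + 1))` are differences of two threshold counts, and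
the threshold counts of `Δ` at `c` and of `Δ'` at `-(c + 1)` count the same predicate over the
window `(N, N + M]` and over that window shifted by `c`, so they differ by at most `|c|`. -/

section Counting

variable {α : Type*} (s : Finset α)

lemma Finset.cast_card_filter_and_not {p q : α → Prop} [DecidablePred p] [DecidablePred q]
    (h : ∀ x ∈ s, q x → p x) :
    (#{x ∈ s | p x ∧ ¬ q x} : ℤ) = #{x ∈ s | p x} - #{x ∈ s | q x} := by
  classical
  rw [filter_and_not, cast_card_sdiff]
  exact monotone_filter_right s h

variable (g : α → ℤ) {a b : ℤ}

lemma Finset.cast_card_filter_lt_and_le_eq_card_le_sub_card_le (hab : a ≤ b) :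
    (#{x ∈ s | a < g x ∧ g x ≤ b} : ℤ) = #{x ∈ s | g x ≤ b} - #{x ∈ s | g x ≤ a} := by
  rw [← cast_card_filter_and_not s fun x _ hx => hx.trans hab]
  simp only [not_le, and_comm]

lemma Finset.cast_card_filter_lt_and_le_eq_card_lt_sub_card_lt (hab : a ≤ b) :
    (#{x ∈ s | a < g x ∧ g x ≤ b} : ℤ) = #{x ∈ s | a < g x} - #{x ∈ s | b < g x} := by
  rw [← cast_card_filter_and_not s fun x _ hx => hab.trans_lt hx]
  simp only [not_lt]

end Counting

lemma Finset.card_filter_le_card_filter_add_card_sdiff {α : Type*} [DecidableEq α]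
    (p : α → Prop) [DecidablePred p] (u v : Finset α) :
    #{x ∈ u | p x} ≤ #{x ∈ v | p x} + #(u \ v) := by
  have hsdiff : {x ∈ u | p x} \ {x ∈ v | p x} ⊆ u \ v := fun x hx => by
    simp only [mem_sdiff, mem_filter, not_and] at hx ⊢
    exact ⟨hx.1.1, fun hv => hx.2 hv hx.1.2⟩
  calc #{x ∈ u | p x} ≤ #({x ∈ u | p x} \ {x ∈ v | p x}) + #{x ∈ v | p x} :=
        card_le_card_sdiff_add_card
    _ ≤ #{x ∈ v | p x} + #(u \ v) := by
        rw [Nat.add_comm]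
        exact Nat.add_le_add_left (card_le_card hsdiff) _

namespace Int

lemma card_Ioc_add_sdiff_Ioc_le (x y c : ℤ) : #(Ioc (x + c) (y + c) \ Ioc x y) ≤ c.natAbs := by
  have hsub : Ioc (x + c) (y + c) \ Ioc x y ⊆ Ioc y (y + c) ∪ Ioc (x + c) x := by
    intro n hn
    simp only [mem_sdiff, mem_union, mem_Ioc, not_and, not_le] at hn ⊢
    omega
  refine (card_le_card hsub).trans ((card_union_le _ _).trans ?_)
  rw [card_Ioc, card_Ioc]
  omega

lemma card_filter_Ioc_add (p : ℤ → Prop) [DecidablePred p] (x y c : ℤ) :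
    #{n ∈ Ioc x y | p (n + c)} = #{n ∈ Ioc (x + c) (y + c) | p n} := by
  rw [← map_add_right_Ioc, filter_map, card_map]
  rfl

lemma abs_card_filter_Ioc_add_sub_le (p : ℤ → Prop) [DecidablePred p] (x y c : ℤ) :
    |(#{n ∈ Ioc (x + c) (y + c) | p n} : ℤ) - #{n ∈ Ioc x y | p n}| ≤ |c| := by
  have hle := card_filter_le_card_filter_add_card_sdiff p (Ioc (x + c) (y + c)) (Ioc x y)
  have hge := card_filter_le_card_filter_add_card_sdiff p (Ioc x y) (Ioc (x + c) (y + c))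
  have hshift := card_Ioc_add_sdiff_Ioc_le x y c
  have hshift' := card_Ioc_add_sdiff_Ioc_le (x + c) (y + c) (-c)
  simp only [add_neg_cancel_right, natAbs_neg] at hshift'
  rw [abs_le, abs_eq_natAbs]
  omega

end Int

section Delta

variable {t γ : ℤ → ℝ} {Δ Δ' : ℤ → ℤ}

lemma delta_le_iff (ht : Monotone t) (hΔ : ∀ n, t (n + Δ n - 1) < γ n ∧ γ n ≤ t (n + Δ n))
    (n c : ℤ) : Δ n ≤ c ↔ γ n ≤ t (n + c) := by
  refine ⟨fun h => (hΔ n).2.trans (ht (by omega)), fun h => ?_⟩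
  by_contra! hc
  exact (h.trans (ht (by omega))).not_gt (hΔ n).1

lemma lt_delta'_iff (hγ : Monotone γ) (hΔ' : ∀ n, γ (n + Δ' n) ≤ t n ∧ t n < γ (n + Δ' n + 1))
    (n c : ℤ) : c < Δ' n ↔ γ (n + c + 1) ≤ t n := by
  refine ⟨fun h => (hγ (by omega)).trans (hΔ' n).1, fun h => ?_⟩
  by_contra! hc
  exact (h.trans_lt (hΔ' n).2).not_ge (hγ (by omega))

lemma delta_le_iff_lt_delta' (ht : Monotone t) (hγ : Monotone γ)
    (hΔ : ∀ n, t (n + Δ n - 1) < γ n ∧ γ n ≤ t (n + Δ n))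
    (hΔ' : ∀ n, γ (n + Δ' n) ≤ t n ∧ t n < γ (n + Δ' n + 1)) (n c : ℤ) :
    Δ n ≤ c ↔ -(c + 1) < Δ' (n + c) := by
  rw [delta_le_iff ht hΔ, lt_delta'_iff hγ hΔ']
  ring_nf

lemma abs_card_delta_le_sub_card_lt_delta'_le (ht : Monotone t) (hγ : Monotone γ)
    (hΔ : ∀ n, t (n + Δ n - 1) < γ n ∧ γ n ≤ t (n + Δ n))
    (hΔ' : ∀ n, γ (n + Δ' n) ≤ t n ∧ t n < γ (n + Δ' n + 1)) (x y c : ℤ) :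
    |(#{n ∈ Ioc x y | Δ n ≤ c} : ℤ) - #{n ∈ Ioc x y | -(c + 1) < Δ' n}| ≤ |c| := by
  simp only [delta_le_iff_lt_delta' ht hγ hΔ hΔ', Int.card_filter_Ioc_add (fun n => -(c + 1) < Δ' n)]
  exact Int.abs_card_filter_Ioc_add_sub_le _ x y c

end Delta

theorem count_delta_close_general (N M : ℤ)
    (t γ : ℤ → ℝ) (ht : StrictMono t) (hγ : Monotone γ)
    (Δ Δ' : ℤ → ℤ)
    (hΔ : ∀ n, t (n + Δ n - 1) < γ n ∧ γ n ≤ t (n + Δ n))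
    (hΔ' : ∀ n, γ (n + Δ' n) ≤ t n ∧ t n < γ (n + Δ' n + 1))
    (a b : ℤ) (hab : a < b) :
    |(((Finset.Ioc N (N + M)).filter fun n => a < Δ n ∧ Δ n ≤ b).card : ℤ) -
        (((Finset.Ioc N (N + M)).filter fun n =>
          -(b + 1) < Δ' n ∧ Δ' n ≤ -(a + 1)).card : ℤ)| ≤ |a| + |b| + 2 := by
  have hclose := abs_card_delta_le_sub_card_lt_delta'_le ht.monotone hγ hΔ hΔ' N (N + M)
  rw [cast_card_filter_lt_and_le_eq_card_le_sub_card_le _ _ hab.le,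
    cast_card_filter_lt_and_le_eq_card_lt_sub_card_lt _ _ (by omega)]
  calc _ = |((#{n ∈ Ioc N (N + M) | Δ n ≤ b} : ℤ) - #{n ∈ Ioc N (N + M) | -(b + 1) < Δ' n}) -
        ((#{n ∈ Ioc N (N + M) | Δ n ≤ a} : ℤ) - #{n ∈ Ioc N (N + M) | -(a + 1) < Δ' n})| := by
          ring_nf
    _ ≤ |b| + |a| := (abs_sub _ _).trans (add_le_add (hclose b) (hclose a))
    _ ≤ |a| + |b| + 2 := by linarith

/-- Lemma 2 of the paper: with `Δ n` defined by
`t (n + Δ n - 1) < γ n ≤ t (n + Δ n)` and `Δ' n` by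
`γ (n + Δ' n) ≤ t n < γ (n + Δ' n + 1)`, the counts
`e(a,b) = #{n ∈ (N, N+M] : a < Δ n ≤ b}` and
`f(a,b) = #{n ∈ (N, N+M] : a < Δ' n ≤ b}` satisfy
`|e(a,b) − f(−(b+1), −(a+1))| ≤ |a| + |b| + 2`. -/
theorem count_delta_close (N M : ℤ) (hN : 0 < N) (hM : 0 < M)
    (t γ : ℤ → ℝ) (ht : StrictMono t) (hγ : Monotone γ)
    (httop : Filter.Tendsto t Filter.atTop Filter.atTop)
    (htbot : Filter.Tendsto t Filter.atBot Filter.atBot)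
    (hγtop : Filter.Tendsto γ Filter.atTop Filter.atTop)
    (hγbot : Filter.Tendsto γ Filter.atBot Filter.atBot)
    (Δ Δ' : ℤ → ℤ)
    (hΔ : ∀ n, t (n + Δ n - 1) < γ n ∧ γ n ≤ t (n + Δ n))
    (hΔ' : ∀ n, γ (n + Δ' n) ≤ t n ∧ t n < γ (n + Δ' n + 1))
    (a b : ℤ) (hab : a < b) :
    |(((Finset.Ioc N (N + M)).filter fun n => a < Δ n ∧ Δ n ≤ b).card : ℤ) -
        (((Finset.Ioc N (N + M)).filter fun n =>
          -(b + 1) < Δ' n ∧ Δ' n ≤ -(a + 1)).card : ℤ)| ≤ |a| + |b| + 2 :=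
  count_delta_close_general N M t γ ht hγ Δ Δ' hΔ hΔ' a b hab
end

section
/- Suppose ν : ℕ → ℕ satisfies ν(j) ≤ D·M·e^{−C j} for all j ≥ 1, where C, D > 0 and M > 0. Then for any real a ≥ 1 with C ≤ 1, ∑_{j=1}^∞ j^a · ν(j) ≤ 3·D·M·Γ(a+1)/C^{a+1}. -/
/-!
Each term is at most `D M j^a e^{-Cj}`. Since `x ↦ x^a` increases and `x ↦ e^{-Cx}` decreases,
the partial sums of `j^a e^{-Cj}` are bounded by `∫₀^∞ x^a e^{-C(x-1)} dx = e^C Γ(a+1)/C^{a+1}`,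
and `e^C ≤ e < 3` because `C ≤ 1`.
-/

open MeasureTheory Set Real

lemma intervalIntegral_rpow_mul_exp_neg_le {s M c : ℝ} (hs : -1 < s) (hM : 0 ≤ M) (hc : 0 < c) :
    ∫ x in (0 : ℝ)..M, x ^ s * exp (-(c * x)) ≤ Gamma (s + 1) / c ^ (s + 1) := by
  have key := integral_rpow_mul_exp_neg_mul_Ioi (by linarith : 0 < s + 1) hc
  rw [add_sub_cancel_right] at key
  have hint : IntegrableOn (fun x ↦ x ^ s * exp (-(c * x))) (Ioi 0) :=
    .of_integral_ne_zero (by rw [key]; exact (mul_pos (by positivity) (Gamma_pos_of_pos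
      (by linarith))).ne')
  rw [intervalIntegral.integral_of_le hM]
  calc ∫ x in Ioc (0 : ℝ) M, x ^ s * exp (-(c * x))
    _ ≤ ∫ x in Ioi (0 : ℝ), x ^ s * exp (-(c * x)) := by
        apply setIntegral_mono_set hint _ Ioc_subset_Ioi_self.eventuallyLE
        filter_upwards [ae_restrict_mem measurableSet_Ioi] with x hx
        exact mul_nonneg (rpow_nonneg hx.le _) (exp_nonneg _)
    _ = Gamma (s + 1) / c ^ (s + 1) := by
        rw [key, one_div, inv_rpow hc.le, div_eq_inv_mul]

lemma sum_range_rpow_mul_exp_neg_le {s c : ℝ} (hs : 0 ≤ s) (hc : 0 < c) (N : ℕ) :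
    ∑ i ∈ Finset.range N, (i : ℝ) ^ s * exp (-(c * i)) ≤ exp c * Gamma (s + 1) / c ^ (s + 1) :=
  calc ∑ i ∈ Finset.range N, (i : ℝ) ^ s * exp (-(c * i))
    _ ≤ ∫ x in (0 : ℕ)..N, x ^ s * exp (-(c * (x - 1))) := by
      rw [Finset.range_eq_Ico]
      apply sum_mul_Ico_le_integral_of_monotone_antitone
        (f := fun x ↦ x ^ s) (g := fun x ↦ exp (-(c * x))) (Nat.zero_le N)
      · intro x hx y _ hxy
        exact rpow_le_rpow (by simpa using hx.1) hxy hs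
      · intro x _ y _ hxy
        exact exp_monotone (by simp only [neg_le_neg_iff]; gcongr)
      · simp [zero_rpow_nonneg]
      · exact exp_nonneg _
    _ = exp c * ∫ x in (0 : ℝ)..N, x ^ s * exp (-(c * x)) := by
      rw [← intervalIntegral.integral_const_mul, Nat.cast_zero]
      congr 1 with x
      rw [mul_left_comm, ← exp_add]
      ring_nf
    _ ≤ exp c * Gamma (s + 1) / c ^ (s + 1) := by
      rw [mul_div_assoc]
      gcongr
      exact intervalIntegral_rpow_mul_exp_neg_le (by linarith) N.cast_nonneg hc

theorem sum_pow_mult_bound_general (ν : ℕ → ℕ) (C D M : ℝ)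
    (hC : 0 < C) (hC1 : C ≤ 1)
    (hν : ∀ j : ℕ, 1 ≤ j → (ν j : ℝ) ≤ D * M * Real.exp (-C * j))
    (a : ℝ) (ha : 1 ≤ a) :
    (∑' j : ℕ, (j : ℝ) ^ a * ν j) ≤
      3 * D * M * Real.Gamma (a + 1) / C ^ (a + 1) := by
  have hDM : 0 ≤ D * M :=
    (mul_nonneg_iff_of_pos_right (exp_pos _)).mp ((Nat.cast_nonneg _).trans (hν 1 le_rfl))
  have hterm (j : ℕ) : (j : ℝ) ^ a * ν j ≤ D * M * ((j : ℝ) ^ a * exp (-(C * j))) := by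
    rcases j.eq_zero_or_pos with rfl | hj
    · simp [zero_rpow (by linarith : a ≠ 0)]
    · rw [mul_left_comm, ← neg_mul]
      exact mul_le_mul_of_nonneg_left (hν j hj) (by positivity)
  have hexp : exp C ≤ 3 := (exp_le_exp.mpr hC1).trans exp_one_lt_three.le
  have hΓ : 0 ≤ Gamma (a + 1) / C ^ (a + 1) :=
    div_nonneg (Gamma_nonneg_of_nonneg (by linarith)) (by positivity)
  refine Real.tsum_le_of_sum_range_le (fun j ↦ by positivity) fun N ↦ ?_
  calc ∑ j ∈ Finset.range N, (j : ℝ) ^ a * ν j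
    _ ≤ D * M * ∑ j ∈ Finset.range N, (j : ℝ) ^ a * exp (-(C * j)) := by
      rw [Finset.mul_sum]
      exact Finset.sum_le_sum fun j _ ↦ hterm j
    _ ≤ D * M * (exp C * Gamma (a + 1) / C ^ (a + 1)) := by
      gcongr
      exact sum_range_rpow_mul_exp_neg_le (by linarith) hC N
    _ = D * M * exp C * (Gamma (a + 1) / C ^ (a + 1)) := by ring
    _ ≤ D * M * 3 * (Gamma (a + 1) / C ^ (a + 1)) := by gcongr
    _ = 3 * D * M * Gamma (a + 1) / C ^ (a + 1) := by ring

/-- if `ν(j) ≤ D·M·e^{−Cj}` for all `j ≥ 1` with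
`0 < C ≤ 1`, `D > 0`, `M > 0`, then for any real `a ≥ 1`,
`∑_{j≥1} j^a ν(j) ≤ 3·D·M·Γ(a+1)/C^{a+1}`. -/
theorem sum_pow_mult_bound (ν : ℕ → ℕ) (C D M : ℝ)
    (hC : 0 < C) (hC1 : C ≤ 1) (hD : 0 < D) (hM : 0 < M)
    (hν : ∀ j : ℕ, 1 ≤ j → (ν j : ℝ) ≤ D * M * Real.exp (-C * j))
    (a : ℝ) (ha : 1 ≤ a) :
    (∑' j : ℕ, (j : ℝ) ^ a * ν j) ≤
      3 * D * M * Real.Gamma (a + 1) / C ^ (a + 1) :=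
  sum_pow_mult_bound_general ν C D M hC hC1 hν a ha
end
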